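/- arXiv:1701.05161 — 9 statements merged into one kernel-verified Lean document; each statement's English description precedes it below -/
import Mathlib

section
/- Let λ > 1 and let p be a real number with λ/(2λ−1) ≤ p < 2. Then for all real numbers a and b, max(a², b²) ≤ (1/(2−p)) · [a² + b² + ((λ−1)/λ)·(a−b)²]. -/
/-! Put `c = (λ - 1)/λ`. Minimising `b² + c (a - b)²` over `b` gives `c/(1+c) · a²`, and
`1 + c/(1+c) = 2 - λ/(2λ - 1) ≥ 2 - p`, so `(2 - p) a²` is at most the bracket; the bound for
`b²` is the same with `a` and `b` exchanged. -/

lemma mul_sq_div_one_add_le {c : ℝ} (hc : 0 < 1 + c) (a b : ℝ) :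
    c / (1 + c) * a ^ 2 ≤ b ^ 2 + c * (a - b) ^ 2 := by
  have hsq : (1 + c) * (b ^ 2 + c * (a - b) ^ 2) - c * a ^ 2 = ((1 + c) * b - c * a) ^ 2 := by
    ring
  rw [div_mul_eq_mul_div, div_le_iff₀ hc]
  linarith [hsq, sq_nonneg ((1 + c) * b - c * a)]

lemma sq_le_div_two_sub {lam p : ℝ} (hlam : 1 < lam) (hp1 : lam / (2 * lam - 1) ≤ p)
    (hp2 : p < 2) (a b : ℝ) :
    a ^ 2 ≤ (a ^ 2 + b ^ 2 + ((lam - 1) / lam) * (a - b) ^ 2) / (2 - p) := by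
  have hc : 0 ≤ (lam - 1) / lam := div_nonneg (by linarith) (by linarith)
  have hweight : (lam - 1) / lam / (1 + (lam - 1) / lam) = 1 - lam / (2 * lam - 1) := by
    have h1 : 1 + (lam - 1) / lam = (2 * lam - 1) / lam := by field_simp; ring
    rw [h1, div_div_div_cancel_right₀ (by positivity), eq_sub_iff_add_eq, ← add_div,
      div_eq_one_iff_eq (by linarith)]
    ring
  have hmin := mul_sq_div_one_add_le (by linarith : 0 < 1 + (lam - 1) / lam) a b
  rw [hweight] at hmin
  rw [le_div_iff₀ (by linarith)]
  linarith [mul_le_mul_of_nonneg_right hp1 (sq_nonneg a)]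

theorem stmt0 (lam p : ℝ) (hlam : 1 < lam)
    (hp1 : lam / (2 * lam - 1) ≤ p) (hp2 : p < 2) (a b : ℝ) :
    max (a ^ 2) (b ^ 2)
      ≤ (1 / (2 - p)) * (a ^ 2 + b ^ 2 + ((lam - 1) / lam) * (a - b) ^ 2) := by
  rw [one_div_mul_eq_div]
  refine max_le (sq_le_div_two_sub hlam hp1 hp2 a b) ?_
  have hb := sq_le_div_two_sub hlam hp1 hp2 b a
  rwa [add_comm (b ^ 2), ← neg_sub a b, neg_sq] at hb
end

section
/- Let λ > 1 and let p be a real number with λ/(2λ+1) ≤ p < 2. Then for all real numbers c and d, max(c², d²) ≤ (1/(2−p)) · [c² + d² + ((λ+1)/λ)·(c+d)²]. -/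
/-!
Minimising over `y`, `y² + k (x + y)² ≥ k/(1+k) · x²` for `k > -1`, by completing the square.
With `k = (λ+1)/λ` this gives `x² + y² + k (x + y)² ≥ (2 - λ/(2λ+1)) x² ≥ (2 - p) x²`,
and the bound for `max (c², d²)` follows by symmetry in `c, d`.
-/

lemma div_one_add_mul_sq_le_sq_add_mul_add_sq {k : ℝ} (hk : -1 < k) (x y : ℝ) :
    k / (1 + k) * x ^ 2 ≤ y ^ 2 + k * (x + y) ^ 2 := by
  have hk' : 0 < 1 + k := by linarith
  rw [div_mul_eq_mul_div, div_le_iff₀ hk']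
  -- `(1 + k) (y² + k (x + y)²) - k x² = ((1 + k) y + k x)²`
  nlinarith [sq_nonneg ((1 + k) * y + k * x)]

lemma sq_le_one_div_mul_sq_add_sq_add_mul_add_sq {k a : ℝ} (hk : -1 < k) (ha : 0 < a)
    (hak : a ≤ 1 + k / (1 + k)) (x y : ℝ) :
    x ^ 2 ≤ 1 / a * (x ^ 2 + y ^ 2 + k * (x + y) ^ 2) := by
  rw [one_div, ← div_eq_inv_mul, le_div_iff₀ ha]
  calc x ^ 2 * a ≤ x ^ 2 * (1 + k / (1 + k)) := mul_le_mul_of_nonneg_left hak (sq_nonneg x)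
    _ = x ^ 2 + k / (1 + k) * x ^ 2 := by ring
    _ ≤ x ^ 2 + y ^ 2 + k * (x + y) ^ 2 := by
      linarith [div_one_add_mul_sq_le_sq_add_mul_add_sq hk x y]

theorem stmt1 (lam p : ℝ) (hlam : 1 < lam)
    (hp1 : lam / (2 * lam + 1) ≤ p) (hp2 : p < 2) (c d : ℝ) :
    max (c ^ 2) (d ^ 2)
      ≤ (1 / (2 - p)) * (c ^ 2 + d ^ 2 + ((lam + 1) / lam) * (c + d) ^ 2) := by
  have hlam₀ : 0 < lam := by linarith
  have hk : -1 < (lam + 1) / lam := by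
    have : 0 < (lam + 1) / lam := by positivity
    linarith
  have hthreshold : 1 + (lam + 1) / lam / (1 + (lam + 1) / lam) = 2 - lam / (2 * lam + 1) := by
    field_simp
    ring
  have hbound := sq_le_one_div_mul_sq_add_sq_add_mul_add_sq hk (a := 2 - p) (by linarith)
    (by linarith)
  refine max_le (hbound c d) ?_
  calc d ^ 2 ≤ 1 / (2 - p) * (d ^ 2 + c ^ 2 + (lam + 1) / lam * (d + c) ^ 2) := hbound d c
    _ = 1 / (2 - p) * (c ^ 2 + d ^ 2 + (lam + 1) / lam * (c + d) ^ 2) := by ring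
end

section
/- Let λ > 1, let p be a real number with λ/(2λ−1) ≤ p < 2, and let x > 0. Suppose the real numbers u, v, u_t, u_x, v_t, v_x satisfy the constraints u_x − v_t = (λ/x)·u and u_t + v_x = −(λ/x)·v. Then (u_t·u + v_t·v)² + (u_x·u + v_x·v)² ≤ (1/(2−p)) · (u² + v²) · [u_t² + u_x² + v_t² + v_x² + ((λ²−λ)/x²)·u² + ((λ²+λ)/x²)·v²]. -/
/-!
Eliminate `v_t`, `v_x` through the two constraints and put `R = u² + v²`, `L`, `Q` for the
gradient terms on the left and right. At the critical exponent `p₀ = λ / (2λ - 1)` the defect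
`(2λ - 1) R Q - (3λ - 2) L` is a quadratic in `(u_t, u_x)` with leading form `R (u_t² + u_x²)`;
completing the square, `R` times the defect is `λ` times a sum of two squares plus
`2 (2λ - 1) λ R² v² / x²`, hence nonnegative once `λ ≥ 1/2`. For `p ≥ p₀` the factor
`1 / (2 - p)` only grows.
-/

theorem bessel_defect_sos_identity (lam x u v s w : ℝ) :
    (u ^ 2 + v ^ 2) * ((2 * lam - 1) * (u ^ 2 + v ^ 2) *
        (s ^ 2 + w ^ 2 + (w - lam / x * u) ^ 2 + (-(lam / x * v) - s) ^ 2 +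
          (lam ^ 2 - lam) / x ^ 2 * u ^ 2 + (lam ^ 2 + lam) / x ^ 2 * v ^ 2) -
      (3 * lam - 2) * ((s * u + (w - lam / x * u) * v) ^ 2 +
        (w * u + (-(lam / x * v) - s) * v) ^ 2))
    = lam * (((u ^ 2 + v ^ 2) * s + 1 / x *
          ((2 * lam - 1) * (u ^ 2 + v ^ 2) * v + (3 * lam - 2) * v * (u ^ 2 - v ^ 2))) ^ 2 +
        ((u ^ 2 + v ^ 2) * w + 1 / x *
          (2 * (3 * lam - 2) * u * v ^ 2 - (2 * lam - 1) * (u ^ 2 + v ^ 2) * u)) ^ 2) +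
      2 * (2 * lam - 1) * lam * (1 / x) ^ 2 * (u ^ 2 + v ^ 2) ^ 2 * v ^ 2 := by
  ring

theorem bessel_gradient_ineq_critical (lam x : ℝ) (hlam : 1 / 2 ≤ lam)
    (u v ut ux vt vx : ℝ)
    (h1 : ux - vt = (lam / x) * u)
    (h2 : ut + vx = -(lam / x) * v) :
    (3 * lam - 2) * ((ut * u + vt * v) ^ 2 + (ux * u + vx * v) ^ 2)
      ≤ (2 * lam - 1) * (u ^ 2 + v ^ 2) *
        (ut ^ 2 + ux ^ 2 + vt ^ 2 + vx ^ 2 +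
          ((lam ^ 2 - lam) / x ^ 2) * u ^ 2 + ((lam ^ 2 + lam) / x ^ 2) * v ^ 2) := by
  obtain rfl : vt = ux - lam / x * u := by linarith
  obtain rfl : vx = -(lam / x * v) - ut := by linarith
  rcases (add_nonneg (sq_nonneg u) (sq_nonneg v)).eq_or_lt with hR | hR
  · obtain ⟨rfl, rfl⟩ : u = 0 ∧ v = 0 := by constructor <;> nlinarith [sq_nonneg u, sq_nonneg v]
    simp
  · rw [← sub_nonneg]
    refine nonneg_of_mul_nonneg_right ?_ hR
    rw [bessel_defect_sos_identity]
    have : 0 ≤ 2 * lam - 1 := by linarith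
    positivity

theorem stmt2_general (lam p x : ℝ) (hlam : 1 < lam)
    (hp1 : lam / (2 * lam - 1) ≤ p) (hp2 : p < 2)
    (u v ut ux vt vx : ℝ)
    (h1 : ux - vt = (lam / x) * u)
    (h2 : ut + vx = -(lam / x) * v) :
    (ut * u + vt * v) ^ 2 + (ux * u + vx * v) ^ 2
      ≤ (1 / (2 - p)) * (u ^ 2 + v ^ 2) *
        (ut ^ 2 + ux ^ 2 + vt ^ 2 + vx ^ 2 +
          ((lam ^ 2 - lam) / x ^ 2) * u ^ 2 + ((lam ^ 2 + lam) / x ^ 2) * v ^ 2) := by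
  have h2lam : 0 < 2 * lam - 1 := by linarith
  have hp : (2 - p) * (2 * lam - 1) ≤ 3 * lam - 2 := by
    have := (div_le_iff₀ h2lam).mp hp1
    linarith
  have hcrit := bessel_gradient_ineq_critical lam x (by linarith) u v ut ux vt vx h1 h2
  have hL : 0 ≤ (ut * u + vt * v) ^ 2 + (ux * u + vx * v) ^ 2 := by positivity
  generalize (ut * u + vt * v) ^ 2 + (ux * u + vx * v) ^ 2 = L at hcrit hL ⊢
  generalize ut ^ 2 + ux ^ 2 + vt ^ 2 + vx ^ 2 + ((lam ^ 2 - lam) / x ^ 2) * u ^ 2 +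
    ((lam ^ 2 + lam) / x ^ 2) * v ^ 2 = Q at hcrit ⊢
  have hLQ : (2 - p) * L ≤ (u ^ 2 + v ^ 2) * Q := by
    refine le_of_mul_le_mul_left ?_ h2lam
    linarith [mul_le_mul_of_nonneg_right hp hL]
  calc L ≤ (u ^ 2 + v ^ 2) * Q / (2 - p) := (le_div_iff₀' (by linarith)).mpr hLQ
    _ = 1 / (2 - p) * (u ^ 2 + v ^ 2) * Q := by ring

theorem stmt2 (lam p x : ℝ) (hlam : 1 < lam)
    (hp1 : lam / (2 * lam - 1) ≤ p) (hp2 : p < 2) (hx : 0 < x)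
    (u v ut ux vt vx : ℝ)
    (h1 : ux - vt = (lam / x) * u)
    (h2 : ut + vx = -(lam / x) * v) :
    (ut * u + vt * v) ^ 2 + (ux * u + vx * v) ^ 2
      ≤ (1 / (2 - p)) * (u ^ 2 + v ^ 2) *
        (ut ^ 2 + ux ^ 2 + vt ^ 2 + vx ^ 2 +
          ((lam ^ 2 - lam) / x ^ 2) * u ^ 2 + ((lam ^ 2 + lam) / x ^ 2) * v ^ 2) :=
  stmt2_general lam p x hlam hp1 hp2 u v ut ux vt vx h1 h2
end

section
/- Let λ > 1 and let p ≥ λ/(2λ−1). Let Ω ⊆ ℝ × (0,∞) be an open set and suppose u, v : ℝ × ℝ → ℝ are twice continuously differentiable on Ω and satisfy, at every point (t,x) ∈ Ω, the system ∂_x u(t,x) − ∂_t v(t,x) = (λ/x)·u(t,x) and ∂_t u(t,x) + ∂_x v(t,x) = −(λ/x)·v(t,x). Assume moreover that u(t,x)² + v(t,x)² > 0 at every point of Ω. Then the function |F|^p := (u² + v²)^{p/2} satisfies ∂_t²(|F|^p)(t,x) + ∂_x²(|F|^p)(t,x) ≥ 0 at every point (t,x) ∈ Ω. -/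
/-- Partial derivative with respect to the first coordinate. -/
noncomputable def pdt (f : ℝ × ℝ → ℝ) : ℝ × ℝ → ℝ :=
  fun p => deriv (fun s => f (s, p.2)) p.1

/-- Partial derivative with respect to the second coordinate. -/
noncomputable def pdx (f : ℝ × ℝ → ℝ) : ℝ × ℝ → ℝ :=
  fun p => deriv (fun s => f (p.1, s)) p.2

/-!
With `W = u² + v²`, a direct computation gives
`Δ W^{p/2} = p W^{p/2-2} ((p-2) |u∇u + v∇v|² + W (|∇u|² + |∇v|²) + W (u Δu + v Δv))`.
Differentiating the first-order system and using the symmetry of second derivatives gives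
`Δu = (k² + k') u` and `Δv = (k² - k') v` for `k(x) = λ/x`, where `k' = -k²/λ`.
Eliminating `∂_t v` and `∂_x v` through the system, the bracket becomes a quadratic form in
`(∂_t u, ∂_x u)` whose nonnegativity for `p ≥ λ/(2λ-1)` is witnessed by an explicit sum of squares.
-/

open Filter Topology

section PartialDerivatives

variable {f : ℝ × ℝ → ℝ} {q : ℝ × ℝ}

theorem hasDerivAt_pdt (hf : DifferentiableAt ℝ f q) :
    HasDerivAt (fun s => f (s, q.2)) (pdt f q) q.1 :=
  (hf.comp q.1 (differentiableAt_id.prodMk (differentiableAt_const q.2))).hasDerivAt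

theorem hasDerivAt_pdx (hf : DifferentiableAt ℝ f q) :
    HasDerivAt (fun s => f (q.1, s)) (pdx f q) q.2 :=
  (hf.comp q.2 ((differentiableAt_const q.1).prodMk differentiableAt_id)).hasDerivAt

theorem pdt_eq_fderiv (hf : DifferentiableAt ℝ f q) : pdt f q = fderiv ℝ f q (1, 0) :=
  (hasDerivAt_pdt hf).unique <|
    hf.hasFDerivAt.comp_hasDerivAt q.1 ((hasDerivAt_id q.1).prodMk (hasDerivAt_const q.1 q.2))

theorem pdx_eq_fderiv (hf : DifferentiableAt ℝ f q) : pdx f q = fderiv ℝ f q (0, 1) :=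
  (hasDerivAt_pdx hf).unique <|
    hf.hasFDerivAt.comp_hasDerivAt q.2 ((hasDerivAt_const q.2 q.1).prodMk (hasDerivAt_id q.2))

theorem ContDiffAt.pdt {m n : WithTop ℕ∞} (hf : ContDiffAt ℝ n f q) (hmn : m + 1 ≤ n) :
    ContDiffAt ℝ m (pdt f) q :=
  (ContDiffAt.fderiv (f := fun y s => f (s, y.2)) (hf.comp _ (by fun_prop)) contDiffAt_fst
    hmn).clm_apply contDiffAt_const

theorem ContDiffAt.pdx {m n : WithTop ℕ∞} (hf : ContDiffAt ℝ n f q) (hmn : m + 1 ≤ n) :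
    ContDiffAt ℝ m (pdx f) q :=
  (ContDiffAt.fderiv (f := fun y s => f (y.1, s)) (hf.comp _ (by fun_prop)) contDiffAt_snd
    hmn).clm_apply contDiffAt_const

theorem pdt_pdx_comm (hf : ContDiffAt ℝ 2 f q) : pdt (pdx f) q = pdx (pdt f) q := by
  have hd : ∀ᶠ y in 𝓝 q, DifferentiableAt ℝ f y :=
    (hf.eventually (by simp)).mono fun y hy => hy.differentiableAt (by simp)
  have hD : DifferentiableAt ℝ (fderiv ℝ f) q :=
    (hf.fderiv_right (m := 1) le_rfl).differentiableAt one_ne_zero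
  have hpdx : pdx f =ᶠ[𝓝 q] fun y => fderiv ℝ f y (0, 1) := hd.mono fun y hy => pdx_eq_fderiv hy
  have hpdt : pdt f =ᶠ[𝓝 q] fun y => fderiv ℝ f y (1, 0) := hd.mono fun y hy => pdt_eq_fderiv hy
  rw [pdt_eq_fderiv ((hf.pdx (m := 1) le_rfl).differentiableAt one_ne_zero),
    pdx_eq_fderiv ((hf.pdt (m := 1) le_rfl).differentiableAt one_ne_zero), hpdx.fderiv_eq,
    hpdt.fderiv_eq, fderiv_clm_apply hD (differentiableAt_const _),
    fderiv_clm_apply hD (differentiableAt_const _)]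
  simpa using hf.isSymmSndFDerivAt (by simp) (1, 0) (0, 1)

end PartialDerivatives

theorem deriv_deriv_rpow_sq_add_sq {a b : ℝ → ℝ} {s : ℝ} (ha : ContDiffAt ℝ 2 a s)
    (hb : ContDiffAt ℝ 2 b s) (hpos : 0 < a s ^ 2 + b s ^ 2) (p : ℝ) :
    deriv (deriv fun r => (a r ^ 2 + b r ^ 2) ^ (p / 2)) s =
      p * (a s ^ 2 + b s ^ 2) ^ (p / 2 - 2) *
        ((p - 2) * (a s * deriv a s + b s * deriv b s) ^ 2 +
          (a s ^ 2 + b s ^ 2) * (deriv a s ^ 2 + deriv b s ^ 2 +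
            a s * deriv (deriv a) s + b s * deriv (deriv b) s)) := by
  set W := fun r => a r ^ 2 + b r ^ 2
  have hW : ∀ᶠ r in 𝓝 s, HasDerivAt W (2 * (a r * deriv a r + b r * deriv b r)) r := by
    filter_upwards [ha.eventually (by simp), hb.eventually (by simp)] with r har hbr
    refine (((har.differentiableAt (by simp)).hasDerivAt.fun_pow 2).fun_add
      ((hbr.differentiableAt (by simp)).hasDerivAt.fun_pow 2)).congr_deriv ?_
    push_cast
    ring
  have hWpos : ∀ᶠ r in 𝓝 s, 0 < W r :=
    ((ha.continuousAt.pow 2).add (hb.continuousAt.pow 2)).eventually (lt_mem_nhds hpos)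
  have hderiv : deriv (fun r => W r ^ (p / 2)) =ᶠ[𝓝 s]
      fun r => p * (W r ^ (p / 2 - 1) * (a r * deriv a r + b r * deriv b r)) := by
    filter_upwards [hW, hWpos] with r hWr hWr_pos
    rw [(hWr.rpow_const (Or.inl hWr_pos.ne')).deriv]
    ring
  have ha' := (ha.derivWithin (m := 1) le_rfl).differentiableAt one_ne_zero
  have hb' := (hb.derivWithin (m := 1) le_rfl).differentiableAt one_ne_zero
  have hda := (ha.differentiableAt (by simp)).hasDerivAt
  have hdb := (hb.differentiableAt (by simp)).hasDerivAt
  have hD := (((hW.self_of_nhds.rpow_const (p := p / 2 - 1) (Or.inl hpos.ne')).fun_mul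
    ((hda.fun_mul ha'.hasDerivAt).fun_add (hdb.fun_mul hb'.hasDerivAt))).const_mul p)
  rw [hderiv.deriv_eq, hD.deriv, show p / 2 - 1 - 1 = p / 2 - 2 by ring,
    show p / 2 - 1 = p / 2 - 2 + 1 by ring, Real.rpow_add_one hpos.ne']
  ring

theorem laplacian_rpow_sq_add_sq {u v : ℝ × ℝ → ℝ} {q : ℝ × ℝ} (hu : ContDiffAt ℝ 2 u q)
    (hv : ContDiffAt ℝ 2 v q) (hpos : 0 < u q ^ 2 + v q ^ 2) (p : ℝ) :
    pdt (pdt fun r => (u r ^ 2 + v r ^ 2) ^ (p / 2)) q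
        + pdx (pdx fun r => (u r ^ 2 + v r ^ 2) ^ (p / 2)) q =
      p * (u q ^ 2 + v q ^ 2) ^ (p / 2 - 2) *
        ((p - 2) * ((u q * pdt u q + v q * pdt v q) ^ 2 + (u q * pdx u q + v q * pdx v q) ^ 2) +
          (u q ^ 2 + v q ^ 2) * (pdt u q ^ 2 + pdx u q ^ 2 + pdt v q ^ 2 + pdx v q ^ 2) +
          (u q ^ 2 + v q ^ 2) * (u q * (pdt (pdt u) q + pdx (pdx u) q)
            + v q * (pdt (pdt v) q + pdx (pdx v) q))) := by
  obtain ⟨t, x⟩ := q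
  have ht := deriv_deriv_rpow_sq_add_sq (a := fun s => u (s, x)) (b := fun s => v (s, x))
    (hu.comp t (by fun_prop)) (hv.comp t (by fun_prop)) hpos p
  have hx := deriv_deriv_rpow_sq_add_sq (a := fun s => u (t, s)) (b := fun s => v (t, s))
    (hu.comp x (by fun_prop)) (hv.comp x (by fun_prop)) hpos p
  -- `pdt (pdt g) (t, x)` unfolds to the second derivative of `s ↦ g (s, x)` at `t`.
  simp only [pdt, pdx] at ht hx ⊢
  rw [ht, hx]
  ring

theorem laplacian_of_bessel_system {u v : ℝ × ℝ → ℝ} {k : ℝ → ℝ} {k' : ℝ} {q : ℝ × ℝ}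
    (hu : ContDiffAt ℝ 2 u q) (hv : ContDiffAt ℝ 2 v q) (hk : HasDerivAt k k' q.2)
    (h₁ : ∀ᶠ y in 𝓝 q, pdx u y - pdt v y = k y.2 * u y)
    (h₂ : ∀ᶠ y in 𝓝 q, pdt u y + pdx v y = -k y.2 * v y) :
    pdt (pdt u) q + pdx (pdx u) q = (k q.2 ^ 2 + k') * u q ∧
      pdt (pdt v) q + pdx (pdx v) q = (k q.2 ^ 2 - k') * v q := by
  obtain ⟨t, x⟩ := q
  have hline_t : Tendsto (fun s : ℝ => (s, x)) (𝓝 t) (𝓝 (t, x)) :=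
    (Continuous.prodMk_left x).tendsto t
  have hline_x : Tendsto (fun s : ℝ => (t, s)) (𝓝 x) (𝓝 (t, x)) :=
    (Continuous.prodMk_right t).tendsto x
  have d₀ {f : ℝ × ℝ → ℝ} (hf : ContDiffAt ℝ 2 f (t, x)) : DifferentiableAt ℝ f (t, x) :=
    hf.differentiableAt (by simp)
  have d₁ {f : ℝ × ℝ → ℝ} (hf : ContDiffAt ℝ 2 f (t, x)) :
      DifferentiableAt ℝ (pdt f) (t, x) ∧ DifferentiableAt ℝ (pdx f) (t, x) :=
    ⟨(hf.pdt (m := 1) le_rfl).differentiableAt one_ne_zero,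
      (hf.pdx (m := 1) le_rfl).differentiableAt one_ne_zero⟩
  have h₁t : pdt (pdx u) (t, x) - pdt (pdt v) (t, x) = k x * pdt u (t, x) :=
    ((hasDerivAt_pdt (d₁ hu).2).sub (hasDerivAt_pdt (d₁ hv).1)).unique
      (((hasDerivAt_pdt (d₀ hu)).const_mul (k x)).congr_of_eventuallyEq (hline_t.eventually h₁))
  have h₁x : pdx (pdx u) (t, x) - pdx (pdt v) (t, x) = k' * u (t, x) + k x * pdx u (t, x) :=
    ((hasDerivAt_pdx (d₁ hu).2).sub (hasDerivAt_pdx (d₁ hv).1)).unique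
      ((hk.mul (hasDerivAt_pdx (d₀ hu))).congr_of_eventuallyEq (hline_x.eventually h₁))
  have h₂t : pdt (pdt u) (t, x) + pdt (pdx v) (t, x) = -k x * pdt v (t, x) :=
    ((hasDerivAt_pdt (d₁ hu).1).add (hasDerivAt_pdt (d₁ hv).2)).unique
      (((hasDerivAt_pdt (d₀ hv)).const_mul (-k x)).congr_of_eventuallyEq (hline_t.eventually h₂))
  have h₂x : pdx (pdt u) (t, x) + pdx (pdx v) (t, x) = -k' * v (t, x) + -k x * pdx v (t, x) :=
    ((hasDerivAt_pdx (d₁ hu).1).add (hasDerivAt_pdx (d₁ hv).2)).unique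
      ((hk.neg.mul (hasDerivAt_pdx (d₀ hv))).congr_of_eventuallyEq (hline_x.eventually h₂))
  constructor
  · linear_combination h₂t + h₁x - pdt_pdx_comm hv + k x * h₁.self_of_nhds
  · linear_combination -h₁t + h₂x + pdt_pdx_comm hu - k x * h₂.self_of_nhds

theorem bessel_bracket_nonneg {lam p k k' u v ut ux vt vx : ℝ} (hlam : 1 / 2 < lam)
    (hp : lam / (2 * lam - 1) ≤ p) (hk' : lam * k' = -k ^ 2) (h₁ : ux - vt = k * u)
    (h₂ : ut + vx = -k * v) :
    0 ≤ (p - 2) * ((u * ut + v * vt) ^ 2 + (u * ux + v * vx) ^ 2)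
      + (u ^ 2 + v ^ 2) * (ut ^ 2 + ux ^ 2 + vt ^ 2 + vx ^ 2)
      + (u ^ 2 + v ^ 2) * (u * ((k ^ 2 + k') * u) + v * ((k ^ 2 - k') * v)) := by
  have hlam₀ : 0 < lam := by linarith
  obtain rfl : vt = ux - k * u := by linarith
  obtain rfl : vx = -ut - k * v := by linarith
  obtain rfl : k' = -k ^ 2 / lam := by field_simp; linarith
  set μ := 2 * lam - 1 with hμ_def
  have hμ : 0 < μ := by linarith
  set c := p * μ - lam with hc_def
  have hc : 0 ≤ c := by rw [div_le_iff₀ hμ] at hp; linarith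
  have hp₀ : 0 < p := (div_pos hlam₀ hμ).trans_le hp
  rcases (add_nonneg (sq_nonneg u) (sq_nonneg v)).eq_or_lt with hW | hW
  · obtain ⟨rfl, rfl⟩ : u = 0 ∧ v = 0 := by constructor <;> nlinarith
    simp
  -- all coefficients on the right are polynomials in `λ, μ, c ≥ 0` with positive coefficients
  have hsos : lam * μ ^ 3 * (p * (u ^ 2 + v ^ 2)) *
      ((p - 2) * ((u * ut + v * (ux - k * u)) ^ 2 + (u * ux + v * (-ut - k * v)) ^ 2)
        + (u ^ 2 + v ^ 2) * (ut ^ 2 + ux ^ 2 + (ux - k * u) ^ 2 + (-ut - k * v) ^ 2)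
        + (u ^ 2 + v ^ 2) * (u * ((k ^ 2 + -k ^ 2 / lam) * u) + v * ((k ^ 2 - -k ^ 2 / lam) * v)))
      = lam * μ ^ 3 * ((p * (u ^ 2 + v ^ 2) * ut + k * v * ((3 - p) * u ^ 2 + (p - 1) * v ^ 2)) ^ 2
          + (p * (u ^ 2 + v ^ 2) * ux - k * u * (u ^ 2 + (2 * p - 3) * v ^ 2)) ^ 2)
        + k ^ 2 * μ ^ 2 * ((v ^ 2) ^ 3 * (2 * lam + c * (μ + 2))
          + u ^ 2 * (v ^ 2) ^ 2 * (4 * lam + c * (3 * μ + 4))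
          + (u ^ 2) ^ 2 * v ^ 2 * (2 * lam + c * (3 * μ + 2)) + (u ^ 2) ^ 3 * (c * μ)) := by
    rw [hc_def, hμ_def]
    field_simp
    ring
  have hC : 0 < lam * μ ^ 3 * (p * (u ^ 2 + v ^ 2)) := by positivity
  exact (mul_nonneg_iff_of_pos_left hC).mp (hsos ▸ by positivity)

theorem stmt6 (lam p : ℝ) (hlam : 1 < lam) (hp : lam / (2 * lam - 1) ≤ p)
    (Ω : Set (ℝ × ℝ)) (hΩ : IsOpen Ω) (hΩpos : ∀ q ∈ Ω, 0 < q.2)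
    (u v : ℝ × ℝ → ℝ)
    (hu : ContDiffOn ℝ 2 u Ω) (hv : ContDiffOn ℝ 2 v Ω)
    (hCR1 : ∀ q ∈ Ω, pdx u q - pdt v q = (lam / q.2) * u q)
    (hCR2 : ∀ q ∈ Ω, pdt u q + pdx v q = -(lam / q.2) * v q)
    (hF : ∀ q ∈ Ω, 0 < u q ^ 2 + v q ^ 2) :
    ∀ q ∈ Ω,
      0 ≤ pdt (pdt (fun r => (u r ^ 2 + v r ^ 2) ^ (p / 2))) q
          + pdx (pdx (fun r => (u r ^ 2 + v r ^ 2) ^ (p / 2))) q := by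
  intro q hq
  have hΩq := hΩ.mem_nhds hq
  have hk : HasDerivAt (fun x => lam / x) (lam * -(q.2 ^ 2)⁻¹) q.2 := by
    simpa [div_eq_mul_inv] using (hasDerivAt_inv (hΩpos q hq).ne').const_mul lam
  obtain ⟨hΔu, hΔv⟩ := laplacian_of_bessel_system (hu.contDiffAt hΩq) (hv.contDiffAt hΩq) hk
    (eventually_of_mem hΩq hCR1) (eventually_of_mem hΩq hCR2)
  rw [laplacian_rpow_sq_add_sq (hu.contDiffAt hΩq) (hv.contDiffAt hΩq) (hF q hq), hΔu, hΔv]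
  have hp₀ : 0 < p := (div_pos (by linarith) (by linarith)).trans_le hp
  exact mul_nonneg (mul_nonneg hp₀.le (Real.rpow_nonneg (by positivity) _))
    (bessel_bracket_nonneg (by linarith) hp (by field_simp) (hCR1 q hq) (hCR2 q hq))
end

section
/- Let C₀ > 0, c > 0, t > 0, and let K : ℝ × ℝ → ℝ be a measurable kernel satisfying |K(x,y)| ≤ C₀ · t^{−1/2} · e^{−(x−y)²/(c·t)} for all x, y ∈ (0,∞). Let U₁, U₂ be nonempty subsets of (0,∞) and let f₁, f₂ ∈ L²((0,∞)) with f₁ supported in U₁ and f₂ supported in U₂. Set d := inf{ |x−y| : x ∈ U₁, y ∈ U₂ }. Then |∫₀^∞ ∫₀^∞ K(x,y) f₁(y) f₂(x) dy dx| ≤ C₀ · √(2πc) · e^{−d²/(2ct)} · ‖f₁‖_{L²((0,∞))} · ‖f₂‖_{L²((0,∞))}. -/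
/-!
On the supports of `f₁` and `f₂` we have `|x - y| ≥ d`, so splitting the Gaussian exponent in
half gives `|K x y| ≤ A * exp (-(x - y)² / (2ct))` with `A = C₀ t^(-1/2) exp (-d² / (2ct))`.
Every row and column integral of this kernel is at most `A √(2πct) = C₀ √(2πc) exp (-d² / (2ct))`,
and the Schur test turns that into the bound on the bilinear form.
-/

open MeasureTheory
open scoped ENNReal

theorem ENNReal.rpow_half_mul_rpow_half (x : ℝ≥0∞) : x ^ (1 / 2 : ℝ) * x ^ (1 / 2 : ℝ) = x := by
  rw [← ENNReal.rpow_add_of_nonneg _ _ (by norm_num) (by norm_num)]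
  norm_num

theorem Real.mul_exp_neg_sq_div_le {C s d u : ℝ} (hC : 0 ≤ C) (hs : 0 < s) (hd : 0 ≤ d)
    (hdu : d ≤ |u|) :
    C * Real.exp (-u ^ 2 / s) ≤ C * Real.exp (-d ^ 2 / (2 * s)) * Real.exp (-u ^ 2 / (2 * s)) := by
  have hdu2 : d ^ 2 ≤ u ^ 2 := sq_le_sq.2 (by rwa [abs_of_nonneg hd])
  rw [mul_assoc, ← Real.exp_add]
  gcongr
  rw [← add_div, div_le_div_iff₀ hs (by positivity)]
  nlinarith

theorem lintegral_ofReal_mul_exp_neg_sq_sub {a s : ℝ} (ha : 0 ≤ a) (hs : 0 < s) (y : ℝ) :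
    ∫⁻ x, ENNReal.ofReal (a * Real.exp (-(x - y) ^ 2 / s)) =
      ENNReal.ofReal (a * √(Real.pi * s)) := by
  have hg : ∀ x : ℝ, Real.exp (-x ^ 2 / s) = Real.exp (-s⁻¹ * x ^ 2) := fun x => by
    rw [neg_div, div_eq_inv_mul, neg_mul]
  rw [lintegral_sub_right_eq_self (fun x => ENNReal.ofReal (a * Real.exp (-x ^ 2 / s))) y,
    ← ofReal_integral_eq_lintegral_ofReal]
  · simp only [hg, integral_const_mul, integral_gaussian, div_inv_eq_mul]
  · simpa only [hg] using (integrable_exp_neg_mul_sq (inv_pos.2 hs)).const_mul a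
  · exact Filter.Eventually.of_forall fun x => by positivity

theorem Real.rpow_neg_half_mul_sqrt_mul {a t : ℝ} (ha : 0 ≤ a) (ht : 0 < t) :
    t ^ (-(1 : ℝ) / 2) * √(a * t) = √a := by
  rw [Real.sqrt_mul ha, neg_div, Real.rpow_neg ht.le, ← Real.sqrt_eq_rpow, mul_left_comm,
    inv_mul_cancel₀ (Real.sqrt_pos.2 ht).ne', mul_one]

theorem sInf_abs_sub_nonneg (U₁ U₂ : Set ℝ) :
    0 ≤ sInf {r : ℝ | ∃ x ∈ U₁, ∃ y ∈ U₂, r = |x - y|} :=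
  Real.sInf_nonneg (by rintro r ⟨x, -, y, -, rfl⟩; exact abs_nonneg _)

theorem sInf_abs_sub_le {U₁ U₂ : Set ℝ} {x y : ℝ} (hx : x ∈ U₁) (hy : y ∈ U₂) :
    sInf {r : ℝ | ∃ x ∈ U₁, ∃ y ∈ U₂, r = |x - y|} ≤ |x - y| :=
  csInf_le ⟨0, by rintro r ⟨x, -, y, -, rfl⟩; exact abs_nonneg _⟩ ⟨x, hx, y, hy, rfl⟩

theorem enorm_mul_mul_le_ofReal_mul {a b c κ : ℝ} (h : b ≠ 0 → c ≠ 0 → |a| ≤ κ) :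
    ‖a * b * c‖ₑ ≤ ENNReal.ofReal κ * ‖b‖ₑ * ‖c‖ₑ := by
  rcases eq_or_ne b 0 with rfl | hb
  · simp
  rcases eq_or_ne c 0 with rfl | hc
  · simp
  rw [enorm_mul, enorm_mul, Real.enorm_eq_ofReal_abs]
  gcongr
  exact h hb hc

theorem lintegral_enorm_rpow_two {α E : Type*} [MeasurableSpace α] {μ : Measure α}
    [NormedAddCommGroup E] (f : α → E) :
    ∫⁻ y, ‖f y‖ₑ ^ (2 : ℝ) ∂μ = eLpNorm f 2 μ ^ (2 : ℝ) := by
  simpa using (eLpNorm_nnreal_pow_eq_lintegral (f := f) (μ := μ) (p := 2) two_ne_zero).symm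

section SchurTest

variable {α β E F : Type*} [MeasurableSpace α] [MeasurableSpace β] {μ : Measure α} {ν : Measure β}
  [SFinite μ] [SFinite ν] [NormedAddCommGroup E] [NormedAddCommGroup F]

theorem lintegral_prod_kernel_mul_enorm_sq_le {k : β → α → ℝ≥0∞}
    (hk : Measurable (Function.uncurry k)) {B : ℝ≥0∞} (hB : ∀ y, ∫⁻ x, k x y ∂ν ≤ B)
    {f : α → E} (hf : AEStronglyMeasurable f μ) :
    ∫⁻ z, k z.1 z.2 * ‖f z.2‖ₑ ^ (2 : ℝ) ∂(ν.prod μ) ≤ B * eLpNorm f 2 μ ^ (2 : ℝ) := by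
  have hmeas : AEMeasurable (fun z : β × α => k z.1 z.2 * ‖f z.2‖ₑ ^ (2 : ℝ)) (ν.prod μ) :=
    hk.aemeasurable.mul (hf.enorm.pow_const _).comp_snd
  calc ∫⁻ z, k z.1 z.2 * ‖f z.2‖ₑ ^ (2 : ℝ) ∂(ν.prod μ)
      = ∫⁻ y, (∫⁻ x, k x y ∂ν) * ‖f y‖ₑ ^ (2 : ℝ) ∂μ := by
        rw [lintegral_prod_symm _ hmeas]
        refine lintegral_congr fun y => ?_
        dsimp only
        exact lintegral_mul_const'' _ (hk.of_uncurry_right (y := y)).aemeasurable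
    _ ≤ ∫⁻ y, B * ‖f y‖ₑ ^ (2 : ℝ) ∂μ := lintegral_mono fun y => mul_le_mul_left (hB y) _
    _ = B * eLpNorm f 2 μ ^ (2 : ℝ) := by
        rw [lintegral_const_mul'' _ (hf.enorm.pow_const _), lintegral_enorm_rpow_two]

theorem lintegral_lintegral_kernel_mul_enorm_le {k : β → α → ℝ≥0∞}
    (hk : Measurable (Function.uncurry k)) {B₁ B₂ : ℝ≥0∞}
    (hB₁ : ∀ y, ∫⁻ x, k x y ∂ν ≤ B₁) (hB₂ : ∀ x, ∫⁻ y, k x y ∂μ ≤ B₂)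
    {f : α → E} {g : β → F} (hf : AEStronglyMeasurable f μ) (hg : AEStronglyMeasurable g ν) :
    ∫⁻ x, ∫⁻ y, k x y * ‖f y‖ₑ * ‖g x‖ₑ ∂μ ∂ν
      ≤ B₁ ^ (1 / 2 : ℝ) * B₂ ^ (1 / 2 : ℝ) * eLpNorm f 2 μ * eLpNorm g 2 ν := by
  -- Cauchy–Schwarz on the product space for `(k^(1/2) ‖f y‖ₑ) * (k^(1/2) ‖g x‖ₑ)`.
  set φ : β × α → ℝ≥0∞ := fun z => k z.1 z.2 ^ (1 / 2 : ℝ) * ‖f z.2‖ₑ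
  set ψ : β × α → ℝ≥0∞ := fun z => k z.1 z.2 ^ (1 / 2 : ℝ) * ‖g z.1‖ₑ
  have hφ : AEMeasurable φ (ν.prod μ) := (hk.pow_const _).aemeasurable.mul hf.enorm.comp_snd
  have hψ : AEMeasurable ψ (ν.prod μ) := (hk.pow_const _).aemeasurable.mul hg.enorm.comp_fst
  have hsq : ∀ a b : ℝ≥0∞, (a ^ (1 / 2 : ℝ) * b) ^ (2 : ℝ) = a * b ^ (2 : ℝ) := fun a b => by
    rw [ENNReal.mul_rpow_of_nonneg _ _ zero_le_two, ← ENNReal.rpow_mul]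
    norm_num
  have hφ₂ : ∫⁻ z, φ z ^ (2 : ℝ) ∂(ν.prod μ) ≤ B₁ * eLpNorm f 2 μ ^ (2 : ℝ) := by
    simpa only [φ, hsq] using lintegral_prod_kernel_mul_enorm_sq_le hk hB₁ hf
  have hψ₂ : ∫⁻ z, ψ z ^ (2 : ℝ) ∂(ν.prod μ) ≤ B₂ * eLpNorm g 2 ν ^ (2 : ℝ) := by
    have h := lintegral_prod_kernel_mul_enorm_sq_le (k := fun y x => k x y) (μ := ν) (ν := μ)
      (hk.comp measurable_swap) hB₂ hg
    rw [← lintegral_prod_swap] at h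
    simpa only [ψ, hsq, Prod.fst_swap, Prod.snd_swap] using h
  have hroot : ∀ B N : ℝ≥0∞, (B * N ^ (2 : ℝ)) ^ (1 / 2 : ℝ) = B ^ (1 / 2 : ℝ) * N := fun B N => by
    rw [ENNReal.mul_rpow_of_nonneg _ _ (by norm_num), ← ENNReal.rpow_mul]
    norm_num
  calc ∫⁻ x, ∫⁻ y, k x y * ‖f y‖ₑ * ‖g x‖ₑ ∂μ ∂ν
      = ∫⁻ z, (φ * ψ) z ∂(ν.prod μ) := by
        rw [lintegral_prod _ (hφ.mul hψ)]
        refine lintegral_congr fun x => lintegral_congr fun y => ?_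
        simp only [Pi.mul_apply, φ, ψ]
        rw [mul_mul_mul_comm, ENNReal.rpow_half_mul_rpow_half, mul_assoc]
    _ ≤ (∫⁻ z, φ z ^ (2 : ℝ) ∂(ν.prod μ)) ^ (1 / 2 : ℝ)
          * (∫⁻ z, ψ z ^ (2 : ℝ) ∂(ν.prod μ)) ^ (1 / 2 : ℝ) :=
        ENNReal.lintegral_mul_le_Lp_mul_Lq _ Real.HolderConjugate.two_two hφ hψ
    _ ≤ (B₁ * eLpNorm f 2 μ ^ (2 : ℝ)) ^ (1 / 2 : ℝ)
          * (B₂ * eLpNorm g 2 ν ^ (2 : ℝ)) ^ (1 / 2 : ℝ) := by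
        gcongr
    _ = B₁ ^ (1 / 2 : ℝ) * B₂ ^ (1 / 2 : ℝ) * eLpNorm f 2 μ * eLpNorm g 2 ν := by
        rw [hroot, hroot]; ring

end SchurTest

theorem enorm_integral_integral_le {α β E : Type*} [MeasurableSpace α] [MeasurableSpace β]
    {μ : Measure α} {ν : Measure β} [NormedAddCommGroup E] [NormedSpace ℝ E] (F : β → α → E) :
    ‖∫ x, ∫ y, F x y ∂μ ∂ν‖ₑ ≤ ∫⁻ x, ∫⁻ y, ‖F x y‖ₑ ∂μ ∂ν :=
  (enorm_integral_le_lintegral_enorm _).trans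
    (lintegral_mono fun _ => enorm_integral_le_lintegral_enorm _)

theorem abs_integral_integral_mul_le_of_enorm_le {α β : Type*} [MeasurableSpace α]
    [MeasurableSpace β] {μ : Measure α} {ν : Measure β} [SFinite μ] [SFinite ν]
    {K : β → α → ℝ} {f : α → ℝ} {g : β → ℝ} {k : β → α → ℝ≥0∞}
    (hk : Measurable (Function.uncurry k)) {B : ℝ} (hB : 0 ≤ B)
    (hB₁ : ∀ y, ∫⁻ x, k x y ∂ν ≤ ENNReal.ofReal B) (hB₂ : ∀ x, ∫⁻ y, k x y ∂μ ≤ ENNReal.ofReal B)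
    (hf : MemLp f 2 μ) (hg : MemLp g 2 ν)
    (hK : ∀ᵐ x ∂ν, ∀ᵐ y ∂μ, ‖K x y * f y * g x‖ₑ ≤ k x y * ‖f y‖ₑ * ‖g x‖ₑ) :
    |∫ x, ∫ y, K x y * f y * g x ∂μ ∂ν| ≤ B * (eLpNorm f 2 μ).toReal * (eLpNorm g 2 ν).toReal := by
  have hschur := lintegral_lintegral_kernel_mul_enorm_le hk hB₁ hB₂ hf.1 hg.1
  rw [ENNReal.rpow_half_mul_rpow_half] at hschur
  have hfin : ENNReal.ofReal B * eLpNorm f 2 μ * eLpNorm g 2 ν ≠ ⊤ :=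
    ENNReal.mul_ne_top (ENNReal.mul_ne_top ENNReal.ofReal_ne_top hf.2.ne) hg.2.ne
  calc |∫ x, ∫ y, K x y * f y * g x ∂μ ∂ν|
      = ‖∫ x, ∫ y, K x y * f y * g x ∂μ ∂ν‖ₑ.toReal := by rw [toReal_enorm, Real.norm_eq_abs]
    _ ≤ (ENNReal.ofReal B * eLpNorm f 2 μ * eLpNorm g 2 ν).toReal :=
        ENNReal.toReal_mono hfin <| (enorm_integral_integral_le _).trans <|
          (lintegral_mono_ae (hK.mono fun x hx => lintegral_mono_ae hx)).trans hschur
    _ = B * (eLpNorm f 2 μ).toReal * (eLpNorm g 2 ν).toReal := by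
        rw [ENNReal.toReal_mul, ENNReal.toReal_mul, ENNReal.toReal_ofReal hB]

theorem stmt10_general (C₀ c t : ℝ) (hC₀ : 0 < C₀) (hc : 0 < c) (ht : 0 < t)
    (K : ℝ → ℝ → ℝ)
    (hK : ∀ x ∈ Set.Ioi (0 : ℝ), ∀ y ∈ Set.Ioi (0 : ℝ),
      |K x y| ≤ C₀ * t ^ (-(1 : ℝ) / 2) * Real.exp (-(x - y) ^ 2 / (c * t)))
    (U₁ U₂ : Set ℝ)
    (f₁ f₂ : ℝ → ℝ)
    (hf₁ : MemLp f₁ 2 (volume.restrict (Set.Ioi 0)))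
    (hf₂ : MemLp f₂ 2 (volume.restrict (Set.Ioi 0)))
    (hsupp₁ : ∀ᵐ y ∂(volume.restrict (Set.Ioi (0 : ℝ))), y ∉ U₁ → f₁ y = 0)
    (hsupp₂ : ∀ᵐ x ∂(volume.restrict (Set.Ioi (0 : ℝ))), x ∉ U₂ → f₂ x = 0) :
    |∫ x in Set.Ioi (0 : ℝ), ∫ y in Set.Ioi (0 : ℝ), K x y * f₁ y * f₂ x|
      ≤ C₀ * Real.sqrt (2 * Real.pi * c) *
          Real.exp (-(sInf {r : ℝ | ∃ x ∈ U₁, ∃ y ∈ U₂, r = |x - y|}) ^ 2 / (2 * c * t)) *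
          (eLpNorm f₁ 2 (volume.restrict (Set.Ioi 0))).toReal *
          (eLpNorm f₂ 2 (volume.restrict (Set.Ioi 0))).toReal := by
  set μ := volume.restrict (Set.Ioi (0 : ℝ))
  set d := sInf {r : ℝ | ∃ x ∈ U₁, ∃ y ∈ U₂, r = |x - y|}
  set A := C₀ * t ^ (-(1 : ℝ) / 2) * Real.exp (-d ^ 2 / (2 * c * t))
  set k : ℝ → ℝ → ℝ≥0∞ := fun x y => ENNReal.ofReal (A * Real.exp (-(x - y) ^ 2 / (2 * c * t)))
  have hA : 0 ≤ A := by positivity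
  have hB₁ : ∀ y, ∫⁻ x, k x y ∂μ ≤ ENNReal.ofReal (A * √(Real.pi * (2 * c * t))) := fun y =>
    (setLIntegral_le_lintegral _ _).trans
      (lintegral_ofReal_mul_exp_neg_sq_sub hA (by positivity) y).le
  have hB₂ : ∀ x, ∫⁻ y, k x y ∂μ ≤ ENNReal.ofReal (A * √(Real.pi * (2 * c * t))) := fun x => by
    simpa only [k, sub_sq_comm] using hB₁ x
  have hbound : ∀ᵐ x ∂μ, ∀ᵐ y ∂μ, ‖K x y * f₁ y * f₂ x‖ₑ ≤ k x y * ‖f₁ y‖ₑ * ‖f₂ x‖ₑ := by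
    filter_upwards [ae_restrict_mem measurableSet_Ioi, hsupp₂] with x hx hx₂
    filter_upwards [ae_restrict_mem measurableSet_Ioi, hsupp₁] with y hy hy₁
    refine enorm_mul_mul_le_ofReal_mul fun h₁ h₂ => (hK x hx y hy).trans ?_
    have hdist : d ≤ |x - y| := by
      rw [abs_sub_comm]; exact sInf_abs_sub_le (not_not.1 (mt hy₁ h₁)) (not_not.1 (mt hx₂ h₂))
    simpa only [← mul_assoc 2 c t] using Real.mul_exp_neg_sq_div_le (by positivity)
      (mul_pos hc ht) (sInf_abs_sub_nonneg U₁ U₂) hdist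
  have hAB : A * √(Real.pi * (2 * c * t)) =
      C₀ * √(2 * Real.pi * c) * Real.exp (-d ^ 2 / (2 * c * t)) := by
    rw [show Real.pi * (2 * c * t) = 2 * Real.pi * c * t by ring,
      ← Real.rpow_neg_half_mul_sqrt_mul (a := 2 * Real.pi * c) (by positivity) ht]
    simp only [A]
    ring
  rw [← hAB]
  exact abs_integral_integral_mul_le_of_enorm_le (by fun_prop) (by positivity) hB₁ hB₂ hf₁ hf₂
    hbound

theorem stmt10 (C₀ c t : ℝ) (hC₀ : 0 < C₀) (hc : 0 < c) (ht : 0 < t)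
    (K : ℝ → ℝ → ℝ) (hKmeas : Measurable (Function.uncurry K))
    (hK : ∀ x ∈ Set.Ioi (0 : ℝ), ∀ y ∈ Set.Ioi (0 : ℝ),
      |K x y| ≤ C₀ * t ^ (-(1 : ℝ) / 2) * Real.exp (-(x - y) ^ 2 / (c * t)))
    (U₁ U₂ : Set ℝ) (hU₁ : U₁.Nonempty) (hU₂ : U₂.Nonempty)
    (hU₁sub : U₁ ⊆ Set.Ioi 0) (hU₂sub : U₂ ⊆ Set.Ioi 0)
    (f₁ f₂ : ℝ → ℝ)
    (hf₁ : MemLp f₁ 2 (volume.restrict (Set.Ioi 0)))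
    (hf₂ : MemLp f₂ 2 (volume.restrict (Set.Ioi 0)))
    (hsupp₁ : ∀ᵐ y ∂(volume.restrict (Set.Ioi (0 : ℝ))), y ∉ U₁ → f₁ y = 0)
    (hsupp₂ : ∀ᵐ x ∂(volume.restrict (Set.Ioi (0 : ℝ))), x ∉ U₂ → f₂ x = 0) :
    |∫ x in Set.Ioi (0 : ℝ), ∫ y in Set.Ioi (0 : ℝ), K x y * f₁ y * f₂ x|
      ≤ C₀ * Real.sqrt (2 * Real.pi * c) *
          Real.exp (-(sInf {r : ℝ | ∃ x ∈ U₁, ∃ y ∈ U₂, r = |x - y|}) ^ 2 / (2 * c * t)) *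
          (eLpNorm f₁ 2 (volume.restrict (Set.Ioi 0))).toReal *
          (eLpNorm f₂ 2 (volume.restrict (Set.Ioi 0))).toReal :=
  stmt10_general C₀ c t hC₀ hc ht K hK U₁ U₂ f₁ f₂ hf₁ hf₂ hsupp₁ hsupp₂
end

section
/- For every measurable function f : ℝ × ℝ → ℝ, ∫₀^∞ ∫₀^∞ ( ∫₀^{x₁/2} |f(t₁, x₂)| · t₁/(x₁² − t₁²) dt₁ ) dx₁ dx₂ = (ln 3)/2 · ∫₀^∞ ∫₀^∞ |f(t₁, x₂)| dt₁ dx₂, where both sides are values in [0, ∞]. -/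
/-!
For fixed `x₂`, Tonelli swaps the order of integration over the triangle `0 < 2 t₁ < x₁`.
For each `t₁ > 0` the kernel then integrates to
`∫_{2t₁}^∞ t₁ / (x₁² - t₁²) dx₁ = [½ log ((x₁ - t₁) / (x₁ + t₁))]_{2t₁}^∞ = ½ log 3`,
independently of `t₁`.
-/

open MeasureTheory Set Filter Real Topology Function
open scoped ENNReal

theorem hasDerivAt_log_sub_log_add_div_two {t x : ℝ} (h₁ : x - t ≠ 0) (h₂ : x + t ≠ 0) :
    HasDerivAt (fun x => (log (x - t) - log (x + t)) / 2) (t / (x ^ 2 - t ^ 2)) x := by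
  have h : HasDerivAt (fun x => (log (x - t) - log (x + t)) / 2)
      ((1 / (x - t) - 1 / (x + t)) / 2) x :=
    ((((hasDerivAt_id x).sub_const t).log h₁).sub
      (((hasDerivAt_id x).add_const t).log h₂)).div_const 2
  refine h.congr_deriv ?_
  rw [show x ^ 2 - t ^ 2 = (x - t) * (x + t) by ring]
  field_simp
  ring

theorem tendsto_log_sub_sub_log_add (t : ℝ) :
    Tendsto (fun x => log (x - t) - log (x + t)) atTop (𝓝 0) := by
  have h := (tendsto_log_comp_add_sub_log (-2 * t)).comp
    (tendsto_atTop_add_const_right _ t tendsto_id)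
  refine h.congr fun x => ?_
  simp only [comp_apply, id]
  ring_nf

theorem lintegral_Ioi_div_sq_sub_sq {t a : ℝ} (ht : 0 ≤ t) (hta : t < a) :
    ∫⁻ x in Ioi a, ENNReal.ofReal (t / (x ^ 2 - t ^ 2))
      = ENNReal.ofReal ((log (a + t) - log (a - t)) / 2) := by
  have hderiv : ∀ x ∈ Ioi a, HasDerivAt (fun x => (log (x - t) - log (x + t)) / 2)
      (t / (x ^ 2 - t ^ 2)) x := fun x (hx : a < x) =>
    hasDerivAt_log_sub_log_add_div_two (by linarith) (by linarith)
  have hcont : ContinuousWithinAt (fun x => (log (x - t) - log (x + t)) / 2) (Ici a) a :=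
    (hasDerivAt_log_sub_log_add_div_two (by linarith) (by linarith)).continuousAt.continuousWithinAt
  have hnonneg : ∀ x ∈ Ioi a, 0 ≤ t / (x ^ 2 - t ^ 2) := fun x (hx : a < x) =>
    div_nonneg ht (by nlinarith)
  have htend := (tendsto_log_sub_sub_log_add t).div_const 2
  rw [zero_div] at htend
  rw [← ofReal_integral_eq_lintegral_ofReal
      (integrableOn_Ioi_deriv_of_nonneg hcont hderiv hnonneg htend)
      ((ae_restrict_iff' measurableSet_Ioi).mpr (ae_of_all _ hnonneg)),
    integral_Ioi_of_hasDerivAt_of_nonneg hcont hderiv hnonneg htend]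
  congr 1
  ring

theorem lintegral_Ioi_two_mul_div_sq_sub_sq {t : ℝ} (ht : 0 < t) :
    ∫⁻ x in Ioi (2 * t), ENNReal.ofReal (t / (x ^ 2 - t ^ 2)) = ENNReal.ofReal (log 3 / 2) := by
  rw [lintegral_Ioi_div_sq_sub_sq ht.le (by linarith), show 2 * t + t = 3 * t by ring,
    show 2 * t - t = t by ring, log_mul three_ne_zero ht.ne', add_sub_cancel_right]

theorem lintegral_Ioi_lintegral_Ioo_half_mul {g : ℝ → ℝ≥0∞} {k : ℝ → ℝ → ℝ≥0∞} {C : ℝ≥0∞}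
    (hg : Measurable g) (hk : Measurable (uncurry k))
    (hC : ∀ t > 0, ∫⁻ x in Ioi (2 * t), k x t = C) :
    ∫⁻ x in Ioi 0, ∫⁻ t in Ioo 0 (x / 2), g t * k x t = C * ∫⁻ t in Ioi 0, g t := by
  set F : ℝ → ℝ → ℝ≥0∞ := fun x t => (Iio (x / 2)).indicator (fun t => g t * k x t) t
  have hF : Measurable (uncurry F) :=
    ((hg.comp measurable_snd).mul hk).indicator
      (measurableSet_lt measurable_snd (measurable_fst.div_const 2))
  have hinner : ∀ x, ∫⁻ t in Ioo 0 (x / 2), g t * k x t = ∫⁻ t in Ioi 0, F x t := fun x => by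
    rw [lintegral_indicator measurableSet_Iio, Measure.restrict_restrict measurableSet_Iio,
      Iio_inter_Ioi]
  have houter : ∀ t ∈ Ioi (0 : ℝ), ∫⁻ x in Ioi 0, F x t = C * g t := fun t (ht : 0 < t) => by
    have hF_eq : ∀ x, F x t = (Ioi (2 * t)).indicator (fun x => g t * k x t) x := fun x => by
      simp only [F, indicator_apply, mem_Iio, mem_Ioi, lt_div_iff₀' (two_pos : (0 : ℝ) < 2)]
    simp_rw [hF_eq]
    rw [lintegral_indicator measurableSet_Ioi, Measure.restrict_restrict measurableSet_Ioi,
      Ioi_inter_Ioi, sup_eq_left.mpr (by positivity),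
      lintegral_const_mul _ hk.of_uncurry_right, hC t ht, mul_comm]
  calc ∫⁻ x in Ioi 0, ∫⁻ t in Ioo 0 (x / 2), g t * k x t
      = ∫⁻ x in Ioi 0, ∫⁻ t in Ioi 0, F x t := lintegral_congr hinner
    _ = ∫⁻ t in Ioi 0, ∫⁻ x in Ioi 0, F x t := lintegral_lintegral_swap hF.aemeasurable
    _ = ∫⁻ t in Ioi 0, C * g t := setLIntegral_congr_fun measurableSet_Ioi houter
    _ = C * ∫⁻ t in Ioi 0, g t := lintegral_const_mul C hg

theorem stmt12 (f : ℝ × ℝ → ℝ) (hf : Measurable f) :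
    ∫⁻ x₂ in Set.Ioi (0 : ℝ), ∫⁻ x₁ in Set.Ioi (0 : ℝ),
        ∫⁻ t₁ in Set.Ioo 0 (x₁ / 2),
          ENNReal.ofReal (|f (t₁, x₂)| * (t₁ / (x₁ ^ 2 - t₁ ^ 2)))
      = ENNReal.ofReal (Real.log 3 / 2) *
          ∫⁻ x₂ in Set.Ioi (0 : ℝ), ∫⁻ t₁ in Set.Ioi (0 : ℝ),
            ENNReal.ofReal |f (t₁, x₂)| := by
  have hsection : ∀ x₂, ∫⁻ x₁ in Ioi (0 : ℝ), ∫⁻ t₁ in Ioo 0 (x₁ / 2),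
        ENNReal.ofReal (|f (t₁, x₂)| * (t₁ / (x₁ ^ 2 - t₁ ^ 2)))
      = ENNReal.ofReal (log 3 / 2) * ∫⁻ t₁ in Ioi (0 : ℝ), ENNReal.ofReal |f (t₁, x₂)| := by
    intro x₂
    simp_rw [ENNReal.ofReal_mul (abs_nonneg _)]
    exact lintegral_Ioi_lintegral_Ioo_half_mul (by fun_prop) (by fun_prop)
      fun t ht => lintegral_Ioi_two_mul_div_sq_sub_sq ht
  rw [lintegral_congr hsection, lintegral_const_mul]
  exact Measurable.lintegral_prod_right' (f := fun p : ℝ × ℝ => ENNReal.ofReal |f (p.2, p.1)|)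
    (by fun_prop)
end

section
/- For every measurable function f : ℝ × ℝ → ℝ, ∫₀^∞ ∫₀^∞ ( ∫_{3x₁/2}^∞ |f(t₁, x₂)| · t₁/(t₁² − x₁²) dt₁ ) dx₁ dx₂ = (ln 5)/2 · ∫₀^∞ ∫₀^∞ |f(t₁, x₂)| dt₁ dx₂, where both sides are values in [0, ∞]. -/
/-! By Tonelli, the region `0 < x₁, 3 x₁ / 2 < t₁` may be integrated in `x₁` first, over
`0 < x₁ < 2 t₁ / 3`. There `t₁ / (t₁² - x₁²)` has the antiderivative
`(log (t₁ + x₁) - log (t₁ - x₁)) / 2`, so the inner integral equals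
`log ((5/3) / (1/3)) / 2` independently of `t₁`. -/

open MeasureTheory Set Real

theorem hasDerivAt_log_add_sub_log_sub_div_two {t x : ℝ} (h₁ : 0 < t + x) (h₂ : 0 < t - x) :
    HasDerivAt (fun y => (log (t + y) - log (t - y)) / 2) (t / (t ^ 2 - x ^ 2)) x := by
  have d₁ := ((hasDerivAt_id x).const_add t).log h₁.ne'
  have d₂ := ((hasDerivAt_id x).const_sub t).log h₂.ne'
  refine ((d₁.sub d₂).div_const 2).congr_deriv ?_
  have hsq : t ^ 2 - x ^ 2 = (t + x) * (t - x) := by ring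
  simp only [id, hsq]
  field_simp
  ring

theorem integral_div_sq_sub_sq {t a : ℝ} (ha : 0 ≤ a) (hat : a < t) :
    ∫ x in (0 : ℝ)..a, t / (t ^ 2 - x ^ 2) = log ((t + a) / (t - a)) / 2 := by
  have hpos : ∀ x ∈ uIcc 0 a, 0 < t + x ∧ 0 < t - x := by
    intro x hx
    rw [uIcc_of_le ha] at hx
    constructor <;> linarith [hx.1, hx.2]
  rw [intervalIntegral.integral_eq_sub_of_hasDerivAt
    (fun x hx => hasDerivAt_log_add_sub_log_sub_div_two (hpos x hx).1 (hpos x hx).2)]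
  · rw [log_div (by linarith) (by linarith)]
    simp
  · refine ContinuousOn.intervalIntegrable (continuousOn_const.div (by fun_prop) fun x hx => ?_)
    nlinarith [hpos x hx]

theorem setLIntegral_Ioo_ofReal_div_sq_sub_sq {t a : ℝ} (ha : 0 ≤ a) (hat : a < t) :
    ∫⁻ x in Ioo 0 a, ENNReal.ofReal (t / (t ^ 2 - x ^ 2))
      = ENNReal.ofReal (log ((t + a) / (t - a)) / 2) := by
  have hpos : ∀ x ∈ Icc 0 a, 0 < t ^ 2 - x ^ 2 := fun x hx => by nlinarith [hx.1, hx.2]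
  have hcont : ContinuousOn (fun x => t / (t ^ 2 - x ^ 2)) (Icc 0 a) :=
    continuousOn_const.div (by fun_prop) fun x hx => (hpos x hx).ne'
  rw [← integral_div_sq_sub_sq ha hat, intervalIntegral.integral_of_le ha,
    integral_Ioc_eq_integral_Ioo, ofReal_integral_eq_lintegral_ofReal]
  · exact hcont.integrableOn_Icc.mono_set Ioo_subset_Icc_self
  · filter_upwards [ae_restrict_mem measurableSet_Ioo] with x hx
    exact div_nonneg (by linarith [hx.1]) (hpos x (Ioo_subset_Icc_self hx)).le

theorem setLIntegral_Ioi_setLIntegral_Ioi_const_mul_swap {c : ℝ} (hc : 0 < c)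
    {F : ℝ → ℝ → ENNReal} (hF : Measurable (Function.uncurry F)) :
    ∫⁻ x in Ioi 0, ∫⁻ t in Ioi (c * x), F x t
      = ∫⁻ t in Ioi 0, ∫⁻ x in Ioo 0 (t / c), F x t := by
  set S : Set (ℝ × ℝ) := {p | 0 < p.1 ∧ c * p.1 < p.2}
  have hS : MeasurableSet S := (measurableSet_lt measurable_const measurable_fst).inter
    (measurableSet_lt (by fun_prop) measurable_snd)
  have hleft : ∀ x, (Ioi 0).indicator (fun x => ∫⁻ t in Ioi (c * x), F x t) x
      = ∫⁻ t, S.indicator (Function.uncurry F) (x, t) := by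
    intro x
    by_cases hx : 0 < x
    · simp [hx, S, ← lintegral_indicator measurableSet_Ioi, indicator_apply]
    · simp [hx, S]
  have hright : ∀ t, (Ioi 0).indicator (fun t => ∫⁻ x in Ioo 0 (t / c), F x t) t
      = ∫⁻ x, S.indicator (Function.uncurry F) (x, t) := by
    intro t
    by_cases ht : 0 < t
    · rw [indicator_of_mem (mem_Ioi.2 ht), ← lintegral_indicator measurableSet_Ioo]
      congr 1 with x
      simp only [indicator_apply, mem_Ioo, lt_div_iff₀ hc, S, mem_ofPred_eq, mul_comm c,
        Function.uncurry_apply_pair]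
    · have hnot : ∀ x, (x, t) ∉ S := fun x hx => ht (by nlinarith [hx.1, hx.2])
      rw [indicator_of_notMem (notMem_Ioi.2 (not_lt.1 ht))]
      simp [indicator_of_notMem (hnot _)]
  rw [← lintegral_indicator measurableSet_Ioi, ← lintegral_indicator measurableSet_Ioi]
  simp_rw [hleft, hright]
  exact lintegral_lintegral_swap (hF.indicator hS).aemeasurable

theorem setLIntegral_Ioi_setLIntegral_Ioi_mul_div_sq_sub_sq {g : ℝ → ENNReal}
    (hg : Measurable g) :
    ∫⁻ x in Ioi 0, ∫⁻ t in Ioi (3 * x / 2), g t * ENNReal.ofReal (t / (t ^ 2 - x ^ 2))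
      = ENNReal.ofReal (log 5 / 2) * ∫⁻ t in Ioi 0, g t := by
  have hK : ∀ t ∈ Ioi (0 : ℝ),
      ∫⁻ x in Ioo 0 (t / (3 / 2)), ENNReal.ofReal (t / (t ^ 2 - x ^ 2))
        = ENNReal.ofReal (log 5 / 2) := by
    intro t (ht : 0 < t)
    have h5 : (t + t / (3 / 2)) / (t - t / (3 / 2)) = 5 := by field_simp; norm_num
    rw [setLIntegral_Ioo_ofReal_div_sq_sub_sq (by positivity) (by linarith), h5]
  simp_rw [mul_div_right_comm 3 _ (2 : ℝ)]
  rw [setLIntegral_Ioi_setLIntegral_Ioi_const_mul_swap (by norm_num) (by fun_prop),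
    ← lintegral_const_mul _ hg]
  refine setLIntegral_congr_fun measurableSet_Ioi fun t ht => ?_
  rw [lintegral_const_mul _ (by fun_prop), hK t ht, mul_comm]

theorem stmt13 (f : ℝ × ℝ → ℝ) (hf : Measurable f) :
    ∫⁻ x₂ in Set.Ioi (0 : ℝ), ∫⁻ x₁ in Set.Ioi (0 : ℝ),
        ∫⁻ t₁ in Set.Ioi (3 * x₁ / 2),
          ENNReal.ofReal (|f (t₁, x₂)| * (t₁ / (t₁ ^ 2 - x₁ ^ 2)))
      = ENNReal.ofReal (Real.log 5 / 2) *
          ∫⁻ x₂ in Set.Ioi (0 : ℝ), ∫⁻ t₁ in Set.Ioi (0 : ℝ),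
            ENNReal.ofReal |f (t₁, x₂)| := by
  simp_rw [ENNReal.ofReal_mul (abs_nonneg _)]
  rw [← lintegral_const_mul _ (by fun_prop)]
  exact lintegral_congr fun x₂ =>
    setLIntegral_Ioi_setLIntegral_Ioi_mul_div_sq_sub_sq (by fun_prop)
end

section
/- For every measurable function f : ℝ × ℝ → ℝ, ∫₀^∞ ∫₀^∞ ( ∫_{x₁/2}^{3x₁/2} |f(t₁, x₂)| / (x₁ + t₁) dt₁ ) dx₁ dx₂ = ln(9/5) · ∫₀^∞ ∫₀^∞ |f(t₁, x₂)| dt₁ dx₂, where both sides are values in [0, ∞]. -/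
/-!
By Tonelli, integrate in `x` first: for `t > 0` the constraint `a x < t < b x` reads
`t / b < x < t / a`, and since the kernel `1 / (x + t)` is homogeneous of degree `-1`,
`∫_{t/b}^{t/a} dx / (x + t) = log ((1/a + 1) / (1/b + 1))` does not depend on `t`.
For `a = 1/2`, `b = 3/2` this constant is `log (9/5)`.
-/

open MeasureTheory Set ENNReal

theorem lintegral_Ioo_inv_add {a b c : ℝ} (hab : a ≤ b) (hac : 0 < a + c) :
    ∫⁻ x in Ioo a b, ENNReal.ofReal (x + c)⁻¹ = ENNReal.ofReal (Real.log ((b + c) / (a + c))) := by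
  have hpos : ∀ x ∈ Icc a b, 0 < x + c := fun x hx => by linarith [hx.1]
  have hint : IntegrableOn (fun x => (x + c)⁻¹) (Ioo a b) :=
    (ContinuousOn.inv₀ (by fun_prop) fun x hx => (hpos x hx).ne').integrableOn_Icc.mono_set
      Ioo_subset_Icc_self
  have hnn : 0 ≤ᵐ[volume.restrict (Ioo a b)] fun x => (x + c)⁻¹ :=
    (ae_restrict_iff' measurableSet_Ioo).2 <| ae_of_all _ fun x hx =>
      (inv_pos.2 <| hpos x (Ioo_subset_Icc_self hx)).le
  rw [← ofReal_integral_eq_lintegral_ofReal hint hnn, ← integral_Ioc_eq_integral_Ioo,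
    ← intervalIntegral.integral_of_le hab, intervalIntegral.integral_comp_add_right (·⁻¹),
    integral_inv_of_pos hac (by linarith)]

theorem lintegral_Ioi_lintegral_Ioo_mul_swap {a b : ℝ} (ha : 0 < a) (hb : 0 < b)
    {F : ℝ → ℝ → ℝ≥0∞} (hF : Measurable (Function.uncurry F)) :
    ∫⁻ x in Ioi 0, ∫⁻ t in Ioo (a * x) (b * x), F x t
      = ∫⁻ t in Ioi 0, ∫⁻ x in Ioo (t / b) (t / a), F x t := by
  have hmem : ∀ x t : ℝ, 0 < x → 0 < t → (t ∈ Ioo (a * x) (b * x) ↔ x ∈ Ioo (t / b) (t / a)) :=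
    fun x t _ _ => by simp only [mem_Ioo, div_lt_iff₀ hb, lt_div_iff₀ ha, mul_comm x]; tauto
  have hmeas : Measurable (Function.uncurry fun x t => (Ioo (a * x) (b * x)).indicator (F x) t) :=
    Measurable.ite ((measurableSet_lt (measurable_fst.const_mul a) measurable_snd).inter
      (measurableSet_lt measurable_snd (measurable_fst.const_mul b))) hF measurable_const
  calc ∫⁻ x in Ioi 0, ∫⁻ t in Ioo (a * x) (b * x), F x t
      = ∫⁻ x in Ioi 0, ∫⁻ t in Ioi 0, (Ioo (a * x) (b * x)).indicator (F x) t := by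
        refine setLIntegral_congr_fun measurableSet_Ioi fun x (hx : 0 < x) => ?_
        rw [setLIntegral_indicator measurableSet_Ioo,
          inter_eq_left.2 fun t ht => mem_Ioi.2 ((mul_pos ha hx).trans ht.1)]
    _ = ∫⁻ t in Ioi 0, ∫⁻ x in Ioi 0, (Ioo (a * x) (b * x)).indicator (F x) t :=
        lintegral_lintegral_swap hmeas.aemeasurable
    _ = ∫⁻ t in Ioi 0, ∫⁻ x in Ioo (t / b) (t / a), F x t := by
        refine setLIntegral_congr_fun measurableSet_Ioi fun t (ht : 0 < t) => ?_
        rw [← inter_eq_left.2 fun x (hx : x ∈ Ioo (t / b) (t / a)) =>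
            mem_Ioi.2 ((div_pos ht hb).trans hx.1),
          ← setLIntegral_indicator measurableSet_Ioo]
        refine setLIntegral_congr_fun measurableSet_Ioi fun x (hx : 0 < x) => ?_
        simp only [indicator, hmem x t hx ht]

theorem lintegral_Ioi_lintegral_Ioo_mul_inv_add {a b : ℝ} (ha : 0 < a) (hab : a ≤ b)
    {g : ℝ → ℝ≥0∞} (hg : Measurable g) :
    ∫⁻ x in Ioi 0, ∫⁻ t in Ioo (a * x) (b * x), g t * ENNReal.ofReal (x + t)⁻¹
      = ENNReal.ofReal (Real.log ((a⁻¹ + 1) / (b⁻¹ + 1))) * ∫⁻ t in Ioi 0, g t := by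
  rw [lintegral_Ioi_lintegral_Ioo_mul_swap ha (ha.trans_le hab) (by fun_prop),
    ← lintegral_const_mul _ hg]
  refine setLIntegral_congr_fun measurableSet_Ioi fun t (ht : 0 < t) => ?_
  have hb : 0 < b := ha.trans_le hab
  rw [lintegral_const_mul _ (by fun_prop), mul_comm,
    lintegral_Ioo_inv_add (div_le_div_of_nonneg_left ht.le ha hab) (by positivity)]
  congr 3
  field_simp

theorem stmt14 (f : ℝ × ℝ → ℝ) (hf : Measurable f) :
    ∫⁻ x₂ in Set.Ioi (0 : ℝ), ∫⁻ x₁ in Set.Ioi (0 : ℝ),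
        ∫⁻ t₁ in Set.Ioo (x₁ / 2) (3 * x₁ / 2),
          ENNReal.ofReal (|f (t₁, x₂)| / (x₁ + t₁))
      = ENNReal.ofReal (Real.log (9 / 5)) *
          ∫⁻ x₂ in Set.Ioi (0 : ℝ), ∫⁻ t₁ in Set.Ioi (0 : ℝ),
            ENNReal.ofReal |f (t₁, x₂)| := by
  have hIoo : ∀ x : ℝ, Ioo (x / 2) (3 * x / 2) = Ioo (2⁻¹ * x) (3 / 2 * x) := fun x => by
    congr 1 <;> ring
  have hsplit : ∀ x t y : ℝ,
      ENNReal.ofReal (|y| / (x + t)) = ENNReal.ofReal |y| * ENNReal.ofReal (x + t)⁻¹ :=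
    fun x t y => by rw [div_eq_mul_inv, ENNReal.ofReal_mul (abs_nonneg y)]
  calc _ = ∫⁻ x₂ in Ioi 0, ENNReal.ofReal (Real.log (9 / 5)) *
          ∫⁻ t₁ in Ioi 0, ENNReal.ofReal |f (t₁, x₂)| := by
        refine setLIntegral_congr_fun measurableSet_Ioi fun x₂ _ => ?_
        simp_rw [hIoo, hsplit]
        rw [lintegral_Ioi_lintegral_Ioo_mul_inv_add (a := 2⁻¹) (b := 3 / 2) (by norm_num)
          (by norm_num) (by fun_prop)]
        norm_num
    _ = _ := lintegral_const_mul _ (Measurable.lintegral_prod_left (by fun_prop))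
end

section
/- There exists a constant C > 0 such that for every measurable function f : ℝ → ℝ, ∫₀^∞ ( ∫_{x/2}^{3x/2} (1/y) · ( 1 + ln(1 + √(xy)/|x−y|) ) · |f(y)| dy ) dx ≤ C · ∫₀^∞ |f(y)| dy, where both sides are values in [0, ∞]. -/
/-!
After Tonelli, for fixed `y > 0` the region `x / 2 < y < 3 * x / 2` becomes
`2 * y / 3 < x < 2 * y`, and the kernel is homogeneous of degree `-1`: it equals
`y⁻¹ * logProfile (x / y)`. The substitution `x = s * y` turns the inner integral into the
constant `∫ s in (2/3, 2), logProfile s`, which is finite since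
`log (1 + √s / |1 - s|) = log (|1 - s| + √s) - log (1 - s)` is a continuous function minus a
logarithmic singularity.
-/

open MeasureTheory Real Set
open scoped ENNReal

theorem lintegral_setLIntegral_preimage_swap {α β : Type*} [MeasurableSpace α]
    [MeasurableSpace β] {μ : Measure α} {ν : Measure β} [SFinite μ] [SFinite ν]
    {S : Set (α × β)} (hS : MeasurableSet S) {F : α → β → ℝ≥0∞}
    (hF : Measurable (Function.uncurry F)) :
    ∫⁻ x, ∫⁻ y in Prod.mk x ⁻¹' S, F x y ∂ν ∂μ =
      ∫⁻ y, ∫⁻ x in (·, y) ⁻¹' S, F x y ∂μ ∂ν := by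
  calc _ = ∫⁻ x, ∫⁻ y, S.indicator (Function.uncurry F) (x, y) ∂ν ∂μ :=
        lintegral_congr fun x => (lintegral_indicator (measurable_prodMk_left hS) _).symm
    _ = ∫⁻ y, ∫⁻ x, S.indicator (Function.uncurry F) (x, y) ∂μ ∂ν :=
        lintegral_lintegral_swap (hF.indicator hS).aemeasurable
    _ = _ := lintegral_congr fun y => lintegral_indicator (measurable_prodMk_right hS) _

theorem setLIntegral_Ioo_comp_div {c : ℝ} (hc : 0 < c) (g : ℝ → ℝ≥0∞) (a b : ℝ) :
    ∫⁻ x in Ioo (a * c) (b * c), g (x / c) = ENNReal.ofReal c * ∫⁻ s in Ioo a b, g s := by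
  have he : MeasurableEmbedding (· / c : ℝ → ℝ) := by
    simpa only [div_eq_mul_inv] using measurableEmbedding_mulRight₀ (inv_ne_zero hc.ne')
  have hmap : Measure.map (· / c) volume = ENNReal.ofReal c • volume := by
    simpa [div_eq_mul_inv, abs_of_pos hc] using Real.map_volume_mul_right (inv_ne_zero hc.ne')
  rw [← smul_eq_mul (ENNReal.ofReal c), ← lintegral_smul_measure, ← Measure.restrict_smul,
    ← hmap, he.restrict_map, he.lintegral_map]
  congr 2
  ext x
  simp only [mem_Ioo, mem_preimage, lt_div_iff₀ hc, div_lt_iff₀ hc]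

noncomputable def logProfile (s : ℝ) : ℝ := 1 + log (1 + √s / |1 - s|)

theorem one_le_logProfile (s : ℝ) : 1 ≤ logProfile s := by
  have : 0 ≤ log (1 + √s / |1 - s|) :=
    log_nonneg (le_add_of_nonneg_right (by positivity))
  unfold logProfile
  linarith

theorem abs_one_sub_add_sqrt_pos (s : ℝ) : 0 < |1 - s| + √s := by
  rcases eq_or_ne s 1 with rfl | hs
  · simp
  · have := abs_pos.2 (sub_ne_zero.2 hs.symm)
    positivity

-- Also true at `s = 1`, where both sides vanish because `x / 0 = 0` and `log 0 = 0`.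
theorem log_one_add_sqrt_div_abs_one_sub (s : ℝ) :
    log (1 + √s / |1 - s|) = log (|1 - s| + √s) - log (1 - s) := by
  rcases eq_or_ne s 1 with rfl | hs
  · simp
  · have hpos : 0 < |1 - s| := abs_pos.2 (sub_ne_zero.2 hs.symm)
    rw [← log_abs (1 - s), ← log_div (abs_one_sub_add_sqrt_pos s).ne' hpos.ne', add_div,
      div_self hpos.ne']

theorem intervalIntegrable_logProfile (a b : ℝ) :
    IntervalIntegrable logProfile volume a b := by
  have hcont : Continuous fun s : ℝ => log (|1 - s| + √s) :=
    (by fun_prop : Continuous fun s : ℝ => |1 - s| + √s).log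
      fun s => (abs_one_sub_add_sqrt_pos s).ne'
  have hsing : IntervalIntegrable (fun s => log (1 - s)) volume a b := by
    simpa using (intervalIntegral.intervalIntegrable_log' (a := 1 - a) (b := 1 - b)).comp_sub_left 1
  unfold logProfile
  simp_rw [log_one_add_sqrt_div_abs_one_sub]
  exact intervalIntegrable_const.add ((hcont.intervalIntegrable a b).sub hsing)

theorem ofReal_setIntegral_logProfile (a b : ℝ) :
    ENNReal.ofReal (∫ s in Ioo a b, logProfile s) =
      ∫⁻ s in Ioo a b, ENNReal.ofReal (logProfile s) :=
  ofReal_integral_eq_lintegral_ofReal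
    ((intervalIntegrable_logProfile a b).1.mono_set Ioo_subset_Ioc_self)
    (ae_of_all _ fun s => zero_le_one.trans (one_le_logProfile s))

theorem setIntegral_logProfile_pos {a b : ℝ} (hab : a < b) :
    0 < ∫ s in Ioo a b, logProfile s := by
  rw [← ENNReal.ofReal_pos, ofReal_setIntegral_logProfile]
  calc 0 < volume (Ioo a b) := by simpa using hab
    _ = ∫⁻ _ in Ioo a b, 1 := (setLIntegral_one _).symm
    _ ≤ _ := lintegral_mono fun s => ENNReal.one_le_ofReal.2 (one_le_logProfile s)

theorem sqrt_mul_div_abs_sub_eq {x y : ℝ} (hy : 0 < y) :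
    √(x * y) / |x - y| = √(x / y) / |1 - x / y| := by
  rw [one_sub_div hy.ne', abs_div, abs_of_pos hy, abs_sub_comm, sqrt_div' _ hy.le,
    sqrt_mul' _ hy.le, div_div_div_eq, mul_comm √y, mul_div_mul_comm, div_sqrt,
    div_mul_eq_mul_div]

theorem setLIntegral_Ioo_kernel_eq_logProfile {y : ℝ} (hy : 0 < y) (a b : ℝ) :
    ∫⁻ x in Ioo (a * y) (b * y), ENNReal.ofReal (1 / y * (1 + log (1 + √(x * y) / |x - y|))) =
      ∫⁻ s in Ioo a b, ENNReal.ofReal (logProfile s) := by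
  have hhom : ∀ x, 1 / y * (1 + log (1 + √(x * y) / |x - y|)) = 1 / y * logProfile (x / y) :=
    fun x => by rw [logProfile, sqrt_mul_div_abs_sub_eq hy]
  simp_rw [hhom, ENNReal.ofReal_mul (one_div_pos.2 hy).le]
  rw [lintegral_const_mul' _ _ ENNReal.ofReal_ne_top,
    setLIntegral_Ioo_comp_div hy fun s => ENNReal.ofReal (logProfile s), ← mul_assoc,
    ← ENNReal.ofReal_mul (one_div_pos.2 hy).le, one_div_mul_cancel hy.ne', ENNReal.ofReal_one,
    one_mul]

theorem lintegral_Ioi_Ioo_swap {F : ℝ → ℝ → ℝ≥0∞}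
    (hF : Measurable (Function.uncurry F)) :
    ∫⁻ x in Ioi 0, ∫⁻ y in Ioo (x / 2) (3 * x / 2), F x y
      = ∫⁻ y in Ioi 0, ∫⁻ x in Ioo (2 / 3 * y) (2 * y), F x y := by
  let S : Set (ℝ × ℝ) := {p | p.1 / 2 < p.2 ∧ p.2 < 3 * p.1 / 2}
  have hS : MeasurableSet S := by unfold S; measurability
  convert lintegral_setLIntegral_preimage_swap hS hF
    (μ := volume.restrict (Ioi 0)) (ν := volume.restrict (Ioi 0)) using 1
  · refine setLIntegral_congr_fun measurableSet_Ioi fun x (hx : 0 < x) => ?_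
    change _ = ∫⁻ y in Ioo (x / 2) (3 * x / 2), F x y ∂volume.restrict (Ioi 0)
    rw [Measure.restrict_restrict measurableSet_Ioo,
      inter_eq_left.2 (Ioo_subset_Ioi_self.trans (Ioi_subset_Ioi (half_pos hx).le))]
  · refine setLIntegral_congr_fun measurableSet_Ioi fun y (hy : 0 < y) => ?_
    rw [Measure.restrict_restrict (measurable_prodMk_right hS)]
    congr 2
    ext x
    simp only [S, mem_inter_iff, mem_preimage, mem_ofPred_eq, mem_Ioo, mem_Ioi]
    constructor
    · rintro ⟨h₁, h₂⟩; exact ⟨⟨by linarith, by linarith⟩, by linarith⟩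
    · rintro ⟨⟨h₁, h₂⟩, -⟩; exact ⟨by linarith, by linarith⟩

theorem stmt17 :
    ∃ C > (0 : ℝ), ∀ f : ℝ → ℝ, Measurable f →
      (∫⁻ x in Set.Ioi (0 : ℝ), ∫⁻ y in Set.Ioo (x / 2) (3 * x / 2),
          ENNReal.ofReal
            ((1 / y) * (1 + Real.log (1 + Real.sqrt (x * y) / |x - y|)) * |f y|))
        ≤ ENNReal.ofReal C * ∫⁻ y in Set.Ioi (0 : ℝ), ENNReal.ofReal |f y| := by
  refine ⟨∫ s in Ioo (2 / 3) 2, logProfile s, setIntegral_logProfile_pos (by norm_num),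
    fun f hf => le_of_eq ?_⟩
  rw [lintegral_Ioi_Ioo_swap (by fun_prop), ← lintegral_const_mul _ hf.abs.ennreal_ofReal]
  refine setLIntegral_congr_fun measurableSet_Ioi fun y (hy : 0 < y) => ?_
  simp_rw [ENNReal.ofReal_mul' (abs_nonneg (f y))]
  rw [lintegral_mul_const' _ _ ENNReal.ofReal_ne_top, setLIntegral_Ioo_kernel_eq_logProfile hy,
    ofReal_setIntegral_logProfile]
end
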